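/- Let $X$ be a Banach function space on $\mathbb{R}^n$ on which the Hardy–Littlewood maximal operator is weakly bounded. Then $\sup_{B\;\mathrm{ball}} \frac{1}{|B|}\|\chi_B\|_X\,\|\chi_B\|_{X'} < \infty$. -/

import Mathlib

open MeasureTheory Metric Set ENNReal NNReal Filter

noncomputable section

abbrev Rn (n : ℕ) := EuclideanSpace ℝ (Fin n)

/-- The (extended) Hardy--Littlewood maximal operator for `ℝ≥0∞`-valued functions. -/
def HLmaxE {n : ℕ} (f : Rn n → ℝ≥0∞) (x : Rn n) : ℝ≥0∞ :=
  ⨆ (c : Rn n) (r : ℝ) (_ : 0 < r) (_ : x ∈ ball c r),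
    (∫⁻ y in ball c r, f y) / volume (ball c r)

/-- The Hardy--Littlewood maximal operator `M`. -/
def HLmax {n : ℕ} (f : Rn n → ℝ) (x : Rn n) : ℝ≥0∞ :=
  HLmaxE (fun y => (‖f y‖₊ : ℝ≥0∞)) x

/-- A Banach function space over `ℝⁿ`, described by its norm functional. -/
structure BanachFunctionSpace (n : ℕ) where
  N : (Rn n → ℝ) → ℝ≥0∞
  N_zero : ∀ f : Rn n → ℝ, N f = 0 ↔ f =ᵐ[volume] 0
  N_smul : ∀ (c : ℝ) (f : Rn n → ℝ), N (c • f) = (‖c‖₊ : ℝ≥0∞) * N f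
  N_add : ∀ f g : Rn n → ℝ, N (f + g) ≤ N f + N g
  N_abs : ∀ f : Rn n → ℝ, N (fun x => |f x|) = N f
  N_mono : ∀ f g : Rn n → ℝ, (∀ᵐ x ∂volume, |g x| ≤ |f x|) → N g ≤ N f
  N_fatou : ∀ (f : ℕ → Rn n → ℝ) (F : Rn n → ℝ),
      (∀ j, ∀ᵐ x ∂volume, 0 ≤ f j x ∧ f j x ≤ f (j + 1) x) →
      (∀ᵐ x ∂volume, Tendsto (fun j => f j x) atTop (nhds (F x))) →
      Tendsto (fun j => N (f j)) atTop (nhds (N F))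
  N_ind_lt_top : ∀ F : Set (Rn n), MeasurableSet F → volume F < ∞ →
      N (F.indicator (fun _ => (1 : ℝ))) < ∞
  N_loc_int : ∀ F : Set (Rn n), MeasurableSet F → volume F < ∞ →
      ∃ C : ℝ≥0, ∀ h : Rn n → ℝ, (∫⁻ x in F, (‖h x‖₊ : ℝ≥0∞)) ≤ (C : ℝ≥0∞) * N h


/-- The associate space norm of a Banach function space. -/
def BanachFunctionSpace.assoc {n : ℕ} (X : BanachFunctionSpace n) (f : Rn n → ℝ) : ℝ≥0∞ :=
  ⨆ (g : Rn n → ℝ) (_ : X.N g ≤ 1), ∫⁻ x, (‖f x * g x‖₊ : ℝ≥0∞)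

/-- The associate space norm applied to `ℝ≥0∞`-valued functions. -/
def BanachFunctionSpace.assocE {n : ℕ} (X : BanachFunctionSpace n) (f : Rn n → ℝ≥0∞) : ℝ≥0∞ :=
  ⨆ (g : Rn n → ℝ) (_ : X.N g ≤ 1), ∫⁻ x, f x * (‖g x‖₊ : ℝ≥0∞)

/-!
For a ball `B` and `g` with `X.N g ≤ 1`, every point of `B` sees the average `a` of `|g|` over `B`
in the maximal function, so `B ⊆ {M g > λ}` for each `λ < a`. The weak bound then gives
`λ ‖χ_B‖_X ≤ C`, hence `‖χ_B‖_X ∫_B |g| ≤ C |B|`; the supremum over `g` yields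
`‖χ_B‖_X ‖χ_B‖_{X'} ≤ C |B|` uniformly in `B`.
-/

def BanachFunctionSpace.HLmaxWeakBoundedWith {n : ℕ} (X : BanachFunctionSpace n) (C : ℝ) : Prop :=
  ∀ (f : Rn n → ℝ) (lam : ℝ), 0 < lam →
    X.N ({x | ENNReal.ofReal lam < HLmax f x}.indicator (fun _ => (1 : ℝ)))
      ≤ ENNReal.ofReal (C / lam) * X.N f

theorem lintegral_div_volume_le_HLmaxE {n : ℕ} (f : Rn n → ℝ≥0∞) {c x : Rn n} {r : ℝ}
    (hr : 0 < r) (hx : x ∈ ball c r) :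
    (∫⁻ y in ball c r, f y) / volume (ball c r) ≤ HLmaxE f x :=
  le_iSup_of_le c <| le_iSup_of_le r <| le_iSup_of_le hr <| le_iSup_of_le hx le_rfl

namespace BanachFunctionSpace

variable {n : ℕ} (X : BanachFunctionSpace n)

theorem N_indicator_one_mono {s t : Set (Rn n)} (hst : s ⊆ t) :
    X.N (s.indicator fun _ => (1 : ℝ)) ≤ X.N (t.indicator fun _ => (1 : ℝ)) :=
  X.N_mono _ _ <| Eventually.of_forall fun x => by
    have hnonneg (u : Set (Rn n)) : 0 ≤ u.indicator (fun _ => (1 : ℝ)) x :=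
      Set.indicator_nonneg (fun _ _ => zero_le_one) x
    rw [abs_of_nonneg (hnonneg s), abs_of_nonneg (hnonneg t)]
    exact Set.indicator_le_indicator_of_subset hst (fun _ => zero_le_one) x

theorem assoc_indicator_one {s : Set (Rn n)} (hs : MeasurableSet s) :
    X.assoc (s.indicator fun _ => (1 : ℝ)) =
      ⨆ (g : Rn n → ℝ) (_ : X.N g ≤ 1), ∫⁻ x in s, ‖g x‖₊ := by
  simp_rw [← lintegral_indicator hs]
  refine iSup_congr fun g => iSup_congr fun _ => lintegral_congr fun x => ?_
  by_cases hx : x ∈ s <;> simp [hx]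

variable {X} {C : ℝ}

theorem HLmaxWeakBoundedWith.N_indicator_mul_le (hX : X.HLmaxWeakBoundedWith C) {s : Set (Rn n)}
    {g : Rn n → ℝ} {lam : ℝ} (hlam : 0 < lam) (hs : s ⊆ {x | ENNReal.ofReal lam < HLmax g x}) :
    X.N (s.indicator fun _ => (1 : ℝ)) * ENNReal.ofReal lam ≤ ENNReal.ofReal C * X.N g :=
  calc X.N (s.indicator fun _ => (1 : ℝ)) * ENNReal.ofReal lam
      ≤ ENNReal.ofReal (C / lam) * X.N g * ENNReal.ofReal lam := by
        gcongr
        exact (X.N_indicator_one_mono hs).trans (hX g lam hlam)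
    _ = ENNReal.ofReal C * X.N g := by
        rw [mul_right_comm, ← ENNReal.ofReal_mul' hlam.le, div_mul_cancel₀ C hlam.ne']

theorem HLmaxWeakBoundedWith.N_indicator_ball_mul_average_le (hX : X.HLmaxWeakBoundedWith C)
    (g : Rn n → ℝ) {c : Rn n} {r : ℝ} (hr : 0 < r) :
    X.N ((ball c r).indicator fun _ => (1 : ℝ)) *
        ((∫⁻ y in ball c r, ‖g y‖₊) / volume (ball c r)) ≤ ENNReal.ofReal C * X.N g := by
  refine ENNReal.mul_le_of_forall_lt fun k hk ρ hρ => ?_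
  rcases eq_or_ne ρ 0 with rfl | hρ0
  · simp
  have hρtop : ρ ≠ ∞ := hρ.ne_top
  have hsub : ball c r ⊆ {x | ENNReal.ofReal ρ.toReal < HLmax g x} := fun x hx => by
    rw [mem_ofPred_eq, ENNReal.ofReal_toReal hρtop]
    exact hρ.trans_le (lintegral_div_volume_le_HLmaxE _ hr hx)
  calc k * ρ ≤ X.N ((ball c r).indicator fun _ => (1 : ℝ)) * ENNReal.ofReal ρ.toReal := by
        rw [ENNReal.ofReal_toReal hρtop]
        gcongr
    _ ≤ ENNReal.ofReal C * X.N g :=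
        hX.N_indicator_mul_le (ENNReal.toReal_pos hρ0 hρtop) hsub

theorem HLmaxWeakBoundedWith.N_mul_assoc_indicator_ball_le (hX : X.HLmaxWeakBoundedWith C)
    (c : Rn n) {r : ℝ} (hr : 0 < r) :
    X.N ((ball c r).indicator fun _ => (1 : ℝ)) * X.assoc ((ball c r).indicator fun _ => (1 : ℝ))
      ≤ ENNReal.ofReal C * volume (ball c r) := by
  rw [X.assoc_indicator_one measurableSet_ball, ENNReal.mul_iSup]
  refine iSup_le fun g => ?_
  rw [ENNReal.mul_iSup]
  refine iSup_le fun hg => ?_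
  have hvol₀ : volume (ball c r) ≠ 0 := (measure_ball_pos volume c hr).ne'
  calc X.N ((ball c r).indicator fun _ => (1 : ℝ)) * ∫⁻ y in ball c r, ‖g y‖₊
      = X.N ((ball c r).indicator fun _ => (1 : ℝ)) *
          ((∫⁻ y in ball c r, ‖g y‖₊) / volume (ball c r)) * volume (ball c r) := by
        rw [mul_assoc, ENNReal.div_mul_cancel hvol₀ measure_ball_lt_top.ne]
    _ ≤ ENNReal.ofReal C * X.N g * volume (ball c r) := by
        gcongr ?_ * _
        exact hX.N_indicator_ball_mul_average_le g hr
    _ ≤ ENNReal.ofReal C * volume (ball c r) := by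
        gcongr
        exact mul_le_of_le_one_right' hg

end BanachFunctionSpace

theorem sup_ball_norm_product_finite
    {n : ℕ} (X : BanachFunctionSpace n)
    (hweak : ∃ C : ℝ, 0 < C ∧ ∀ (f : Rn n → ℝ) (lam : ℝ), 0 < lam →
      X.N ({x | ENNReal.ofReal lam < HLmax f x}.indicator (fun _ => (1 : ℝ)))
        ≤ ENNReal.ofReal (C / lam) * X.N f) :
    (⨆ (c : Rn n) (r : ℝ) (_ : 0 < r),
      X.N ((ball c r).indicator (fun _ => (1 : ℝ))) *
        X.assoc ((ball c r).indicator (fun _ => (1 : ℝ))) / volume (ball c r)) < ∞ := by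
  obtain ⟨C, -, hX⟩ := hweak
  refine lt_of_le_of_lt (iSup₂_le fun c r => iSup_le fun hr => ?_) (ENNReal.ofReal_lt_top (r := C))
  exact ENNReal.div_le_of_le_mul
    (BanachFunctionSpace.HLmaxWeakBoundedWith.N_mul_assoc_indicator_ball_le hX c hr)

end
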